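/- arXiv:1904.08285 — 3 statements merged into one kernel-verified Lean document; each statement's English description precedes it below -/
import Mathlib

section
/- Let 𝓑 be the 3×3 real matrix with rows (1, β, β^2), (1, Re α, Re α^2), (0, Im α, Im α^2), and let 𝓑* be (2/√23) times the matrix with rows (Im(α)β^{-1}, Im(α)β, Im(α)), (2Im(α)β^2, −Im(α)β, −Im(α)), (β, −1 + (3/2)β^2, −(3/2)β). Then 𝓑* is the dual basis matrix of 𝓑, i.e., 𝓑 (𝓑*)^T is the 3×3 identity matrix. -/
/-!
`α`, `ᾱ` and `β` are the three roots of `f = X³ - X - 1`, so `α` is a root of the cofactor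
`X² + βX + β² - 1`; hence `Re α = -β/2` and `(Im α)² = 3β²/4 - 1`. The discriminant of `f` is
`-23 = (α - ᾱ)² f'(β)²`, which gives `2 Im(α) f'(β) = √23` with `f'(β) = 3β² - 1`. Using also
`β⁻¹ = β² - 1`, the product `𝓑 (𝓑*)ᵀ` without the scalar is `Im(α) f'(β)` times the identity.
-/

lemma sq_add_mul_add_sq_eq_one_of_pow_three_eq {R : Type*} [CommRing R] [IsDomain R]
    {a b : R} (ha : a ^ 3 = a + 1) (hb : b ^ 3 = b + 1) (hab : a ≠ b) :
    a ^ 2 + a * b + b ^ 2 = 1 := by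
  have h : (a - b) * (a ^ 2 + a * b + b ^ 2 - 1) = 0 := by linear_combination ha - hb
  simpa [sub_eq_zero, hab] using h

lemma inv_eq_sq_sub_one_of_pow_three_eq {K : Type*} [Field K] {b : K}
    (hb : b ^ 3 = b + 1) : b⁻¹ = b ^ 2 - 1 :=
  inv_eq_of_mul_eq_one_right (by linear_combination hb)

namespace Complex

variable {z : ℂ} {b c : ℝ}

lemma re_eq_of_sq_add_mul_add_eq_zero (h : z ^ 2 + b * z + c = 0) (hz : z.im ≠ 0) :
    z.re = -b / 2 := by
  have him : z.im * (2 * z.re + b) = 0 := by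
    have := congrArg Complex.im h
    simp only [sq, add_im, mul_im, ofReal_re, ofReal_im, zero_im] at this
    linear_combination this
  linarith [(mul_eq_zero.mp him).resolve_left hz]

lemma im_sq_of_sq_add_mul_add_eq_zero (h : z ^ 2 + b * z + c = 0) (hz : z.im ≠ 0) :
    z.im ^ 2 = c - b ^ 2 / 4 := by
  have hre : z.re ^ 2 - z.im ^ 2 + b * z.re + c = 0 := by
    simpa [sq] using congrArg Complex.re h
  rw [re_eq_of_sq_add_mul_add_eq_zero h hz] at hre
  linear_combination -hre

end Complex

lemma mul_three_mul_sq_sub_one_eq_sqrt_div_two {b y : ℝ} (hb : b ^ 3 = b + 1) (hy : 0 < y)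
    (hy2 : y ^ 2 = 3 * b ^ 2 / 4 - 1) : y * (3 * b ^ 2 - 1) = √23 / 2 := by
  have hpos : 0 < 3 * b ^ 2 - 1 := by nlinarith
  rw [eq_div_iff two_ne_zero, eq_comm, Real.sqrt_eq_iff_eq_sq (by norm_num) (by positivity)]
  -- `(3b² - 4)(3b² - 1)² - 23 = 27 (b³ - b + 1)(b³ - b - 1)`
  linear_combination (-4 * (3 * b ^ 2 - 1) ^ 2) * hy2 + (-27 * (b ^ 3 - b + 1)) * hb

lemma minkowski_mul_transpose_dual {b y : ℝ}
    (hy2 : y ^ 2 = 3 * b ^ 2 / 4 - 1) :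
    (!![1, b, b ^ 2;
        1, -b / 2, b ^ 2 / 4 - y ^ 2;
        0, y, -(b * y)] : Matrix (Fin 3) (Fin 3) ℝ) *
      Matrix.transpose
        (!![y * (b ^ 2 - 1), y * b, y;
            2 * y * b ^ 2, -(y * b), -y;
            b, -1 + (3 / 2) * b ^ 2, -((3 / 2) * b)] : Matrix (Fin 3) (Fin 3) ℝ)
      = (y * (3 * b ^ 2 - 1)) • 1 := by
  ext i j
  fin_cases i <;> fin_cases j <;>
    simp only [Matrix.mul_apply, Fin.sum_univ_three, Matrix.transpose_apply, Matrix.of_apply,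
      Matrix.cons_val', Matrix.cons_val_zero, Matrix.cons_val_one, Matrix.cons_val_two,
      Matrix.cons_val_fin_one, Matrix.smul_apply, Matrix.one_apply, smul_eq_mul, Fin.isValue,
      Fin.zero_eta, Fin.mk_one, Fin.reduceFinMk, Fin.reduceEq, if_true, if_false, mul_one, mul_zero,
      Matrix.vecHead, Matrix.vecTail, Function.comp_apply, Fin.succ_zero_eq_one]
  · ring
  · ring
  · ring
  · linear_combination (-y) * hy2
  · linear_combination y * hy2
  · linear_combination (3 * b / 2) * hy2
  · ring
  · ring
  · ring

theorem dual_basis_matrix_general (β : ℝ) (hβ : β ^ 3 = β + 1)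
    (α : ℂ) (hα : α ^ 3 = α + 1) (hαim : 0 < α.im) :
    (!![1, β, β ^ 2;
        1, α.re, (α ^ 2).re;
        0, α.im, (α ^ 2).im] : Matrix (Fin 3) (Fin 3) ℝ) *
      Matrix.transpose
        ((2 / Real.sqrt 23) •
          (!![α.im * β⁻¹, α.im * β, α.im;
              2 * α.im * β ^ 2, -(α.im * β), -α.im;
              β, -1 + (3 / 2) * β ^ 2, -((3 / 2) * β)] : Matrix (Fin 3) (Fin 3) ℝ))
      = 1 := by
  have hquad : α ^ 2 + β * α + (β ^ 2 - 1 : ℝ) = 0 := by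
    have hβ' : (β : ℂ) ^ 3 = β + 1 := by exact_mod_cast hβ
    have hne : α ≠ β := fun h => hαim.ne' (by simp [h])
    push_cast
    linear_combination sq_add_mul_add_sq_eq_one_of_pow_three_eq hα hβ' hne
  have hre := Complex.re_eq_of_sq_add_mul_add_eq_zero hquad hαim.ne'
  have him2 : α.im ^ 2 = 3 * β ^ 2 / 4 - 1 := by
    rw [Complex.im_sq_of_sq_add_mul_add_eq_zero hquad hαim.ne']; ring
  have hsq_re : (α ^ 2).re = β ^ 2 / 4 - α.im ^ 2 := by simp only [sq, Complex.mul_re, hre]; ring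
  have hsq_im : (α ^ 2).im = -(β * α.im) := by simp only [sq, Complex.mul_im, hre]; ring
  rw [hre, hsq_re, hsq_im, inv_eq_sq_sub_one_of_pow_three_eq hβ, Matrix.transpose_smul,
    Matrix.mul_smul, minkowski_mul_transpose_dual him2, smul_smul,
    mul_three_mul_sq_sub_one_eq_sqrt_div_two hβ hαim him2, div_mul_div_cancel₀ (by positivity), div_self two_ne_zero, one_smul]

/-- With `𝓑` the Minkowski basis matrix and `𝓑*` the stated matrix, `𝓑*` is the
dual basis matrix: `𝓑 (𝓑*)ᵀ = 1`. -/
theorem dual_basis_matrix (β : ℝ) (hβ : β ^ 3 = β + 1) (hβ1 : 1 < β) (hβ2 : β < 2)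
    (α : ℂ) (hα : α ^ 3 = α + 1) (hαim : 0 < α.im) :
    (!![1, β, β ^ 2;
        1, α.re, (α ^ 2).re;
        0, α.im, (α ^ 2).im] : Matrix (Fin 3) (Fin 3) ℝ) *
      Matrix.transpose
        ((2 / Real.sqrt 23) •
          (!![α.im * β⁻¹, α.im * β, α.im;
              2 * α.im * β ^ 2, -(α.im * β), -α.im;
              β, -1 + (3 / 2) * β ^ 2, -((3 / 2) * β)] : Matrix (Fin 3) (Fin 3) ℝ))
      = 1 :=
  dual_basis_matrix_general β hβ α hα hαim
end

section
/- One has 2 Im(α)/(β√23) = (5 − 6β + 4β^2)/23, equivalently 4 + 9β − 6β^2 = β(5 − 6β + 4β^2); consequently the Fourier module L^⊛ = (2Im(α)/(β√23)) · ℤ-span{1, β^2, β} equals ((5 − 6β + 4β^2)/23) · ℤ[β], where ℤ[β] is the ℤ-span of {1, β, β^2} in ℝ. -/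
/-!
Dividing `x³ + p x + q` by `x - β` leaves `x² + β x + (β² + p)`, so a nonreal root `α` has
`Re α = -β/2` and `(2 Im α)² = 3β² + 4p`; for the plastic number this is `3β² - 4`.
Modulo `β³ = β + 1` one checks `23 (3β² - 4) = (4 + 9β - 6β²)²` and
`4 + 9β - 6β² = β (5 - 6β + 4β²)`, a positive number, so `2 Im α · √23 = β (5 - 6β + 4β²)`.
The two lattices then have the same scale factor and the same generators.
-/

namespace Complex

theorem two_mul_im_sq_of_quadratic_eq_zero {z : ℂ} {c d : ℝ}
    (hz : z ^ 2 + c * z + d = 0) (him : z.im ≠ 0) : (2 * z.im) ^ 2 = 4 * d - c ^ 2 := by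
  have hre := congrArg re hz
  have him_eq := congrArg im hz
  simp only [sq, add_re, mul_re, ofReal_re, ofReal_im, add_im, mul_im, zero_re,
    zero_im] at hre him_eq
  have hz_re : 2 * z.re = -c := by
    have : z.im * (2 * z.re + c) = 0 := by linear_combination him_eq
    linarith [(mul_eq_zero.mp this).resolve_left him]
  linear_combination (-4) * hre + (2 * z.re + c) * hz_re

theorem two_mul_im_sq_of_depressed_cubic_eq_zero {α : ℂ} {β p q : ℝ}
    (hβ : β ^ 3 + p * β + q = 0) (hα : α ^ 3 + p * α + q = 0) (him : α.im ≠ 0) :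
    (2 * α.im) ^ 2 = 3 * β ^ 2 + 4 * p := by
  have hβ' : (β : ℂ) ^ 3 + p * β + q = 0 := by exact_mod_cast hβ
  have hne : α - β ≠ 0 := fun h ↦ him (by simpa using congrArg im h)
  have hquad : α ^ 2 + (β : ℂ) * α + ((β ^ 2 + p : ℝ) : ℂ) = 0 := by
    refine (mul_eq_zero.mp ?_).resolve_left hne
    push_cast
    linear_combination hα - hβ'
  rw [two_mul_im_sq_of_quadratic_eq_zero hquad him]
  ring

end Complex

section Plastic

variable {β : ℝ}

theorem plastic_identity (hβ : β ^ 3 = β + 1) :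
    4 + 9 * β - 6 * β ^ 2 = β * (5 - 6 * β + 4 * β ^ 2) := by
  linear_combination (-4) * hβ

theorem plastic_sq_identity (hβ : β ^ 3 = β + 1) :
    23 * (3 * β ^ 2 - 4) = (4 + 9 * β - 6 * β ^ 2) ^ 2 := by
  linear_combination (-36) * (β - 3) * hβ

theorem five_sub_six_mul_add_four_mul_sq_pos (β : ℝ) : 0 < 5 - 6 * β + 4 * β ^ 2 := by
  nlinarith [sq_nonneg (4 * β - 3)]

theorem two_mul_im_mul_sqrt_23 (hβ : β ^ 3 = β + 1) (hβ0 : 0 < β) {α : ℂ}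
    (hα : α ^ 3 = α + 1) (him : 0 < α.im) : 2 * α.im * √23 = β * (5 - 6 * β + 4 * β ^ 2) := by
  have him_sq : (2 * α.im) ^ 2 = 3 * β ^ 2 - 4 := by
    have := Complex.two_mul_im_sq_of_depressed_cubic_eq_zero (p := -1) (q := -1)
      (by linear_combination hβ) (by push_cast; linear_combination hα) him.ne'
    linear_combination this
  have hrhs : 0 ≤ β * (5 - 6 * β + 4 * β ^ 2) := (mul_pos hβ0 (five_sub_six_mul_add_four_mul_sq_pos β)).le
  refine (pow_left_inj₀ (by positivity) hrhs two_ne_zero).mp ?_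
  rw [mul_pow, him_sq, Real.sq_sqrt (by norm_num), ← plastic_identity hβ]
  linear_combination plastic_sq_identity hβ

theorem plastic_scale_eq (hβ : β ^ 3 = β + 1) (hβ0 : 0 < β) {α : ℂ}
    (hα : α ^ 3 = α + 1) (him : 0 < α.im) :
    2 * α.im / (β * √23) = (5 - 6 * β + 4 * β ^ 2) / 23 := by
  have h23 : √23 * √23 = 23 := Real.mul_self_sqrt (by norm_num)
  rw [div_eq_div_iff (by positivity) (by norm_num)]
  linear_combination √23 * two_mul_im_mul_sqrt_23 hβ hβ0 hα him - 2 * α.im * h23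

end Plastic

theorem fourier_module_general (β : ℝ) (hβ : β ^ 3 = β + 1) (hβ1 : 1 < β)
    (α : ℂ) (hα : α ^ 3 = α + 1) (hαim : 0 < α.im) :
    2 * α.im / (β * Real.sqrt 23) = (5 - 6 * β + 4 * β ^ 2) / 23 ∧
      4 + 9 * β - 6 * β ^ 2 = β * (5 - 6 * β + 4 * β ^ 2) ∧
      (fun x : ℝ => 2 * α.im / (β * Real.sqrt 23) * x) ''
          ((Submodule.span ℤ ({1, β ^ 2, β} : Set ℝ) : Submodule ℤ ℝ) : Set ℝ)
        = (fun x : ℝ => (5 - 6 * β + 4 * β ^ 2) / 23 * x) ''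
          ((Submodule.span ℤ ({1, β, β ^ 2} : Set ℝ) : Submodule ℤ ℝ) : Set ℝ) := by
  have hscale := plastic_scale_eq hβ (by linarith) hα hαim
  refine ⟨hscale, plastic_identity hβ, ?_⟩
  rw [hscale, Set.pair_comm (β ^ 2) β]

/-- One has `2 Im(α)/(β√23) = (5 - 6β + 4β²)/23`, equivalently
`4 + 9β - 6β² = β(5 - 6β + 4β²)`; consequently the Fourier module
`L^⊛ = (2Im(α)/(β√23)) · ℤ⟨1, β², β⟩` equals `((5 - 6β + 4β²)/23) · ℤ[β]`. -/
theorem fourier_module (β : ℝ) (hβ : β ^ 3 = β + 1) (hβ1 : 1 < β) (hβ2 : β < 2)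
    (α : ℂ) (hα : α ^ 3 = α + 1) (hαim : 0 < α.im) :
    2 * α.im / (β * Real.sqrt 23) = (5 - 6 * β + 4 * β ^ 2) / 23 ∧
      4 + 9 * β - 6 * β ^ 2 = β * (5 - 6 * β + 4 * β ^ 2) ∧
      (fun x : ℝ => 2 * α.im / (β * Real.sqrt 23) * x) ''
          ((Submodule.span ℤ ({1, β ^ 2, β} : Set ℝ) : Submodule ℤ ℝ) : Set ℝ)
        = (fun x : ℝ => (5 - 6 * β + 4 * β ^ 2) / 23 * x) ''
          ((Submodule.span ℤ ({1, β, β ^ 2} : Set ℝ) : Submodule ℤ ℝ) : Set ℝ) :=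
  fourier_module_general β hβ hβ1 α hα hαim
end

section
/- Suppose the nonempty compact sets W_a, W_b, W_c ⊂ ℂ ≅ ℝ² satisfy W_a = αW_c, W_b = αW_a ∪ (αW_c + 1), W_c = αW_b, and that αW_a ∩ (αW_c + 1) is Lebesgue-null. Let f_i(y) = ∫_{W_i} e^{2πi⟨x, y⟩} dx for i ∈ {a,b,c}, y ∈ ℝ². Then for all y ∈ ℝ²: f_a(y) = β^{-1} f_c(R y), f_b(y) = β^{-1} ( f_a(R y) + e^{2πi y₁} f_c(R y) ), and f_c(y) = β^{-1} f_b(R y); that is, (f_a, f_b, f_c)^T(y) = β^{-1} 𝖡(y) (f_a, f_b, f_c)^T(R y) with the Fourier matrix 𝖡(y) having rows (0, 0, 1), (1, 0, e^{2πi y₁}), (0, 1, 0). -/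
open MeasureTheory Matrix

/-!
Multiplication by `α` is a similarity of `ℂ ≅ ℝ²` with Jacobian `|α|² = β⁻¹`, because `β, α, ᾱ`
are the three roots of `x³ - x - 1`. The substitution `x ↦ αx + c` therefore turns an integral
over `αW + c` into `β⁻¹` times one over `W`, and turns the character `e^{2πi⟨x, y⟩}` into
`e^{2πi⟨c, y⟩} e^{2πi⟨x, Ry⟩}`, since `⟨αx, y⟩ = ⟨x, Ry⟩`. As `αW_a` and `αW_c + 1` overlap
in a null set, the integral over `W_b` splits over the two pieces.
-/

theorem normSq_mul_eq_one_of_pow_three_eq_add_one {β : ℝ} {α : ℂ} (hβ : β ^ 3 = β + 1)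
    (hα : α ^ 3 = α + 1) (hα_im : α.im ≠ 0) : Complex.normSq α * β = 1 := by
  have hαβ : α - β ≠ 0 := fun h => hα_im (by simp [sub_eq_zero.mp h])
  have hquad : α ^ 2 + α * β + β ^ 2 = 1 := by
    have hβc : (β : ℂ) ^ 3 = β + 1 := by exact_mod_cast hβ
    have : (α - β) * (α ^ 2 + α * β + β ^ 2 - 1) = 0 := by linear_combination hα - hβc
    linear_combination (mul_eq_zero.mp this).resolve_left hαβ
  have hre := congrArg Complex.re hquad
  have him := congrArg Complex.im hquad
  simp only [pow_two, Complex.add_re, Complex.add_im, Complex.mul_re, Complex.mul_im,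
    Complex.ofReal_re, Complex.ofReal_im, Complex.one_re, Complex.one_im] at hre him
  have hre_α : 2 * α.re = -β := by
    have : α.im * (2 * α.re + β) = 0 := by linarith
    linarith [(mul_eq_zero.mp this).resolve_left hα_im]
  have hnormSq : Complex.normSq α = β ^ 2 - 1 := by
    rw [Complex.normSq_apply]; linear_combination α.re * hre_α - hre
  rw [hnormSq]; linear_combination hβ

theorem setIntegral_image_mul_add {E : Type*} [NormedAddCommGroup E] [NormedSpace ℝ E]
    {a : ℂ} (ha : a ≠ 0) (c : ℂ) {W : Set ℂ} (hW : MeasurableSet W) (g : ℂ → E) :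
    ∫ x in (fun z => a * z + c) '' W, g x = Complex.normSq a • ∫ x in W, g (a * x + c) := by
  set L : ℂ →L[ℝ] ℂ := (ContinuousLinearMap.mul ℂ ℂ a).restrictScalars ℝ
  have hdet : L.det = Complex.normSq a := by
    rw [← Algebra.norm_complex_apply, Algebra.norm_apply]
    rfl
  have hderiv : ∀ x ∈ W, HasFDerivWithinAt (fun z => a * z + c) L W x :=
    fun x _ => (L.hasFDerivAt.add_const c).hasFDerivWithinAt
  have hinj : Set.InjOn (fun z => a * z + c) W :=
    fun x _ y _ h => mul_left_cancel₀ ha (add_right_cancel h)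
  rw [integral_image_eq_integral_abs_det_fderiv_smul volume hW hderiv hinj g, hdet,
    abs_of_nonneg (Complex.normSq_nonneg a), integral_smul]

theorem setIntegral_image_mul {E : Type*} [NormedAddCommGroup E] [NormedSpace ℝ E]
    {a : ℂ} (ha : a ≠ 0) {W : Set ℂ} (hW : MeasurableSet W) (g : ℂ → E) :
    ∫ x in (fun z => a * z) '' W, g x = Complex.normSq a • ∫ x in W, g (a * x) := by
  simpa using setIntegral_image_mul_add ha 0 hW g

noncomputable def planeChar (y : Fin 2 → ℝ) (x : ℂ) : ℂ :=
  Complex.exp (2 * Real.pi * Complex.I * ((x.re * y 0 + x.im * y 1 : ℝ) : ℂ))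

theorem continuous_planeChar (y : Fin 2 → ℝ) : Continuous (planeChar y) := by
  unfold planeChar; fun_prop

theorem planeChar_add (y : Fin 2 → ℝ) (x z : ℂ) :
    planeChar y (x + z) = planeChar y x * planeChar y z := by
  simp only [planeChar, ← Complex.exp_add, Complex.add_re, Complex.add_im]
  push_cast; ring_nf

theorem planeChar_one (y : Fin 2 → ℝ) :
    planeChar y 1 = Complex.exp (2 * Real.pi * Complex.I * ((y 0 : ℝ) : ℂ)) := by
  simp [planeChar]

theorem planeChar_mul (α : ℂ) (y : Fin 2 → ℝ) (x : ℂ) :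
    planeChar y (α * x) = planeChar (!![α.re, α.im; -α.im, α.re] *ᵥ y) x := by
  simp only [planeChar, Complex.mul_re, Complex.mul_im, mulVec, dotProduct, Fin.sum_univ_two,
    of_apply, cons_val', cons_val_zero, cons_val_one, cons_val_fin_one]
  push_cast; ring_nf

theorem setIntegral_planeChar_image_mul {α : ℂ} (hα : α ≠ 0) {W : Set ℂ}
    (hW : MeasurableSet W) (y : Fin 2 → ℝ) :
    ∫ x in (fun z => α * z) '' W, planeChar y x
      = Complex.normSq α * ∫ x in W, planeChar (!![α.re, α.im; -α.im, α.re] *ᵥ y) x := by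
  simp only [setIntegral_image_mul hα hW, planeChar_mul, Complex.real_smul]

theorem setIntegral_planeChar_image_mul_add_one {α : ℂ} (hα : α ≠ 0) {W : Set ℂ}
    (hW : MeasurableSet W) (y : Fin 2 → ℝ) :
    ∫ x in (fun z => α * z + 1) '' W, planeChar y x
      = Complex.normSq α * (Complex.exp (2 * Real.pi * Complex.I * ((y 0 : ℝ) : ℂ)) *
          ∫ x in W, planeChar (!![α.re, α.im; -α.im, α.re] *ᵥ y) x) := by
  simp only [setIntegral_image_mul_add hα 1 hW, planeChar_add, planeChar_mul, planeChar_one,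
    Complex.real_smul, integral_mul_const]
  ring

theorem window_fourier_recursion_general (β : ℝ) (hβ : β ^ 3 = β + 1)
    (α : ℂ) (hα : α ^ 3 = α + 1) (hαim : 0 < α.im)
    (Wa Wb Wc : Set ℂ)
    (hWa' : IsCompact Wa)
    (hWb' : IsCompact Wb)
    (hWc' : IsCompact Wc)
    (ha : Wa = (fun z => α * z) '' Wc)
    (hb : Wb = (fun z => α * z) '' Wa ∪ (fun z => α * z + 1) '' Wc)
    (hc : Wc = (fun z => α * z) '' Wb)
    (hnull : volume ((fun z => α * z) '' Wa ∩ (fun z => α * z + 1) '' Wc) = 0)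
    (y : Fin 2 → ℝ) :
    (∫ x in Wa, Complex.exp (2 * Real.pi * Complex.I * ((x.re * y 0 + x.im * y 1 : ℝ) : ℂ)))
        = ((β⁻¹ : ℝ) : ℂ) *
          (∫ x in Wc, Complex.exp (2 * Real.pi * Complex.I *
            ((x.re * ((!![α.re, α.im; -α.im, α.re] : Matrix (Fin 2) (Fin 2) ℝ).mulVec y) 0 +
              x.im * ((!![α.re, α.im; -α.im, α.re] : Matrix (Fin 2) (Fin 2) ℝ).mulVec y) 1 : ℝ) : ℂ))) ∧
      (∫ x in Wb, Complex.exp (2 * Real.pi * Complex.I * ((x.re * y 0 + x.im * y 1 : ℝ) : ℂ)))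
        = ((β⁻¹ : ℝ) : ℂ) *
          ((∫ x in Wa, Complex.exp (2 * Real.pi * Complex.I *
            ((x.re * ((!![α.re, α.im; -α.im, α.re] : Matrix (Fin 2) (Fin 2) ℝ).mulVec y) 0 +
              x.im * ((!![α.re, α.im; -α.im, α.re] : Matrix (Fin 2) (Fin 2) ℝ).mulVec y) 1 : ℝ) : ℂ)))
          + Complex.exp (2 * Real.pi * Complex.I * ((y 0 : ℝ) : ℂ)) *
            (∫ x in Wc, Complex.exp (2 * Real.pi * Complex.I *
            ((x.re * ((!![α.re, α.im; -α.im, α.re] : Matrix (Fin 2) (Fin 2) ℝ).mulVec y) 0 +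
              x.im * ((!![α.re, α.im; -α.im, α.re] : Matrix (Fin 2) (Fin 2) ℝ).mulVec y) 1 : ℝ) : ℂ)))) ∧
      (∫ x in Wc, Complex.exp (2 * Real.pi * Complex.I * ((x.re * y 0 + x.im * y 1 : ℝ) : ℂ)))
        = ((β⁻¹ : ℝ) : ℂ) *
          (∫ x in Wb, Complex.exp (2 * Real.pi * Complex.I *
            ((x.re * ((!![α.re, α.im; -α.im, α.re] : Matrix (Fin 2) (Fin 2) ℝ).mulVec y) 0 +
              x.im * ((!![α.re, α.im; -α.im, α.re] : Matrix (Fin 2) (Fin 2) ℝ).mulVec y) 1 : ℝ) : ℂ))) := by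
  
  have hα0 : α ≠ 0 := by rintro rfl; simp at hαim
  have hnormSq : (Complex.normSq α : ℂ) = ((β⁻¹ : ℝ) : ℂ) := by
    rw [eq_inv_of_mul_eq_one_left (normSq_mul_eq_one_of_pow_three_eq_add_one hβ hα hαim.ne')]
  have hint : ∀ {K : Set ℂ}, IsCompact K → IntegrableOn (planeChar y) K :=
    fun hK => (continuous_planeChar y).continuousOn.integrableOn_compact hK
  simp only [← planeChar.eq_1]
  refine ⟨?_, ?_, ?_⟩
  · rw [ha, setIntegral_planeChar_image_mul hα0 hWc'.measurableSet, hnormSq]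
  · have hcompact_a : IsCompact ((fun z => α * z) '' Wa) := hWa'.image (by fun_prop)
    have hcompact_c : IsCompact ((fun z => α * z + 1) '' Wc) := hWc'.image (by fun_prop)
    rw [hb, setIntegral_union₀ hnull hcompact_c.measurableSet.nullMeasurableSet
      (hint hcompact_a) (hint hcompact_c), setIntegral_planeChar_image_mul hα0 hWa'.measurableSet,
      setIntegral_planeChar_image_mul_add_one hα0 hWc'.measurableSet, hnormSq, mul_add]
  · rw [hc, setIntegral_planeChar_image_mul hα0 hWb'.measurableSet, hnormSq]

/-- If the nonempty compact windows `W_a, W_b, W_c ⊆ ℂ` satisfy the IFS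
`W_a = αW_c`, `W_b = αW_a ∪ (αW_c + 1)`, `W_c = αW_b`, with `αW_a ∩ (αW_c + 1)`
Lebesgue-null, then their inverse Fourier transforms
`f_i(y) = ∫_{W_i} e^{2πi⟨x,y⟩} dx` satisfy the recursion
`f_a(y) = β⁻¹ f_c(Ry)`, `f_b(y) = β⁻¹ (f_a(Ry) + e^{2πi y₁} f_c(Ry))`,
`f_c(y) = β⁻¹ f_b(Ry)`, where `R = Qᵀ` and `Q` represents multiplication by `α`. -/
theorem window_fourier_recursion (β : ℝ) (hβ : β ^ 3 = β + 1) (hβ1 : 1 < β) (hβ2 : β < 2)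
    (α : ℂ) (hα : α ^ 3 = α + 1) (hαim : 0 < α.im)
    (Wa Wb Wc : Set ℂ)
    (hWa : Wa.Nonempty) (hWa' : IsCompact Wa)
    (hWb : Wb.Nonempty) (hWb' : IsCompact Wb)
    (hWc : Wc.Nonempty) (hWc' : IsCompact Wc)
    (ha : Wa = (fun z => α * z) '' Wc)
    (hb : Wb = (fun z => α * z) '' Wa ∪ (fun z => α * z + 1) '' Wc)
    (hc : Wc = (fun z => α * z) '' Wb)
    (hnull : volume ((fun z => α * z) '' Wa ∩ (fun z => α * z + 1) '' Wc) = 0)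
    (y : Fin 2 → ℝ) :
    (∫ x in Wa, Complex.exp (2 * Real.pi * Complex.I * ((x.re * y 0 + x.im * y 1 : ℝ) : ℂ)))
        = ((β⁻¹ : ℝ) : ℂ) *
          (∫ x in Wc, Complex.exp (2 * Real.pi * Complex.I *
            ((x.re * ((!![α.re, α.im; -α.im, α.re] : Matrix (Fin 2) (Fin 2) ℝ).mulVec y) 0 +
              x.im * ((!![α.re, α.im; -α.im, α.re] : Matrix (Fin 2) (Fin 2) ℝ).mulVec y) 1 : ℝ) : ℂ))) ∧
      (∫ x in Wb, Complex.exp (2 * Real.pi * Complex.I * ((x.re * y 0 + x.im * y 1 : ℝ) : ℂ)))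
        = ((β⁻¹ : ℝ) : ℂ) *
          ((∫ x in Wa, Complex.exp (2 * Real.pi * Complex.I *
            ((x.re * ((!![α.re, α.im; -α.im, α.re] : Matrix (Fin 2) (Fin 2) ℝ).mulVec y) 0 +
              x.im * ((!![α.re, α.im; -α.im, α.re] : Matrix (Fin 2) (Fin 2) ℝ).mulVec y) 1 : ℝ) : ℂ)))
          + Complex.exp (2 * Real.pi * Complex.I * ((y 0 : ℝ) : ℂ)) *
            (∫ x in Wc, Complex.exp (2 * Real.pi * Complex.I *
            ((x.re * ((!![α.re, α.im; -α.im, α.re] : Matrix (Fin 2) (Fin 2) ℝ).mulVec y) 0 +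
              x.im * ((!![α.re, α.im; -α.im, α.re] : Matrix (Fin 2) (Fin 2) ℝ).mulVec y) 1 : ℝ) : ℂ)))) ∧
      (∫ x in Wc, Complex.exp (2 * Real.pi * Complex.I * ((x.re * y 0 + x.im * y 1 : ℝ) : ℂ)))
        = ((β⁻¹ : ℝ) : ℂ) *
          (∫ x in Wb, Complex.exp (2 * Real.pi * Complex.I *
            ((x.re * ((!![α.re, α.im; -α.im, α.re] : Matrix (Fin 2) (Fin 2) ℝ).mulVec y) 0 +
              x.im * ((!![α.re, α.im; -α.im, α.re] : Matrix (Fin 2) (Fin 2) ℝ).mulVec y) 1 : ℝ) : ℂ))) :=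
  window_fourier_recursion_general β hβ α hα hαim Wa Wb Wc hWa' hWb' hWc' ha hb hc hnull y
end
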